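/- arXiv:cs/0412104 — 2 statements merged into one kernel-verified Lean document; each statement's English description precedes it below -/
import Mathlib

section
/- If b* maximizes gains from trade over all bundles (b* ∈ B*) and (b', p') is any deal with u_c(b, p) < u_c(b', p') (the customer strictly improves), then u_s(b, p) > u_s(b', p') (the seller is strictly worse off), for any price p. The symmetric statement holds with customer and seller interchanged. -/
/-! At a fixed deal the customer's and seller's surpluses `vc b - p` and `p - vs b` add up to the
gains from trade `vc b - vs b`, which the price does not affect. If `b` maximizes the gains from
trade, any other deal splits a total no larger, so one side can only gain strictly if the other
loses strictly; the strictly increasing `gc`, `gs` transport this to utilities. -/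

theorem StrictMono.lt_of_add_le_of_lt {G β γ : Type*} [AddCommGroup G] [LinearOrder G]
    [IsOrderedAddMonoid G] [Preorder β] [Preorder γ] {f : G → β} {g : G → γ}
    (hf : StrictMono f) (hg : StrictMono g) {x y x' y' : G} (hsum : x' + y' ≤ x + y)
    (h : f x < f x') : g y' < g y :=
  hg <| lt_of_not_ge fun hy => (hf.lt_iff_lt.mp h).not_ge (le_of_add_le_add_right
    (hsum.trans (add_le_add_right hy x)))

theorem stmt_1_general {α : Type*} (B : Finset α) (vc vs : α → ℝ) (gc gs : ℝ → ℝ)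
    (hgc : StrictMono gc) (hgs : StrictMono gs)
    (b b' : α) (p p' : ℝ)
    (hb' : b' ∈ B)
    (hmax : ∀ b'' ∈ B, vc b'' - vs b'' ≤ vc b - vs b) :
    (gc (vc b - p) < gc (vc b' - p') → gs (p - vs b) > gs (p' - vs b')) ∧
    (gs (p - vs b) < gs (p' - vs b') → gc (vc b - p) > gc (vc b' - p')) := by
  have hgain := hmax b' hb'
  exact ⟨hgc.lt_of_add_le_of_lt hgs (by linarith), hgs.lt_of_add_le_of_lt hgc (by linarith)⟩

/-- If b ∈ B* and the customer strictly improves moving from (b,p) to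
(b',p'), then the seller is strictly worse off; and symmetrically. -/
theorem stmt_1 {α : Type*} (B : Finset α) (vc vs : α → ℝ) (gc gs : ℝ → ℝ)
    (hgc : StrictMono gc) (hgs : StrictMono gs)
    (b b' : α) (p p' : ℝ)
    (hb : b ∈ B) (hb' : b' ∈ B)
    (hmax : ∀ b'' ∈ B, vc b'' - vs b'' ≤ vc b - vs b) :
    (gc (vc b - p) < gc (vc b' - p') → gs (p - vs b) > gs (p' - vs b')) ∧
    (gs (p - vs b) < gs (p' - vs b') → gc (vc b - p) > gc (vc b' - p')) :=
  stmt_1_general B vc vs gc gs hgc hgs b b' p p' hb' hmax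
end

section
/- A deal (b, p) with b ∈ B and p ∈ ℝ is Pareto efficient if and only if b ∈ B*, i.e., if and only if b maximizes the gains from trade v_c(b) - v_s(b) over all bundles in B. -/
/-!
Since `g_c` and `g_s` are strictly increasing, Pareto domination can be read off the surpluses
`x_c, x_s` themselves. A price only splits the gains from trade `v_c b - v_s b = x_c + x_s` between
the two sides, so some deal on `b'` dominates `(b, p)` exactly when `b'` has strictly larger gains
from trade: then moving to `b'` and sharing the extra gain equally improves both sides.
-/

theorem exists_price_pareto_improvement_iff (vc vs vc' vs' p : ℝ) :
    (∃ p' : ℝ, vc - p ≤ vc' - p' ∧ p - vs ≤ p' - vs' ∧ (vc - p < vc' - p' ∨ p - vs < p' - vs'))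
      ↔ vc - vs < vc' - vs' := by
  constructor
  · rintro ⟨p', hc, hs, hc_lt | hs_lt⟩ <;> linarith
  · intro hgain
    refine ⟨p + vs' - vs + (vc' - vs' - (vc - vs)) / 2, ?_, ?_, Or.inl ?_⟩ <;> linarith

theorem stmt_2_general {α : Type*} (B : Finset α) (vc vs : α → ℝ)
    (gc gs : ℝ → ℝ) (hgc : StrictMono gc) (hgs : StrictMono gs)
    (b : α) (p : ℝ) :
    (¬ ∃ b' ∈ B, ∃ p' : ℝ,
        gc (vc b - p) ≤ gc (vc b' - p') ∧ gs (p - vs b) ≤ gs (p' - vs b') ∧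
        (gc (vc b - p) < gc (vc b' - p') ∨ gs (p - vs b) < gs (p' - vs b')))
      ↔ (∀ b' ∈ B, vc b' - vs b' ≤ vc b - vs b) := by
  simp only [hgc.le_iff_le, hgs.le_iff_le, hgc.lt_iff_lt, hgs.lt_iff_lt,
    exists_price_pareto_improvement_iff, not_exists, not_and, not_lt]

/-- A deal (b, p) with b ∈ B is Pareto efficient iff b maximizes the
gains from trade v_c - v_s over B. -/
theorem stmt_2 {α : Type*} (B : Finset α) (hB : B.Nonempty) (vc vs : α → ℝ)
    (gc gs : ℝ → ℝ) (hgc : StrictMono gc) (hgs : StrictMono gs)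
    (b : α) (p : ℝ) (hb : b ∈ B) :
    (¬ ∃ b' ∈ B, ∃ p' : ℝ,
        gc (vc b - p) ≤ gc (vc b' - p') ∧ gs (p - vs b) ≤ gs (p' - vs b') ∧
        (gc (vc b - p) < gc (vc b' - p') ∨ gs (p - vs b) < gs (p' - vs b')))
      ↔ (∀ b' ∈ B, vc b' - vs b' ≤ vc b - vs b) :=
  stmt_2_general B vc vs gc gs hgc hgs b p
end
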